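/- Let G = (V,E) be a finite simple graph and let P(G) be the number of acyclic orientations of G. If e ∈ E, then P(G) = P(G∖e) + P(G/e), where G∖e deletes e and G/e contracts e (removing any resulting loops and parallel edges). -/

import Mathlib

/-!
Split the acyclic orientations of `G` by the direction of the edge `e = uw`. Deleting the arrow
`u → w` is a bijection onto the acyclic orientations of `G ∖ e` with no directed path `w ⇝ u`, and
symmetrically for `w → u`. An acyclic orientation of `G ∖ e` cannot have both paths `u ⇝ w` and
`w ⇝ u`, so `P(G) = P(G ∖ e) + N`, where `N` counts those with neither path. These are exactly the
orientations that descend along the quotient map `V → V/(u = w)` to an acyclic orientation of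
`G / e`; the inverse pulls an orientation of `G / e` back to the edges of `G ∖ e`.
-/

open SimpleGraph Polynomial

/-- `r` is an orientation of the simple graph `G`: every directed edge lies over an
edge of `G`, and every edge of `G` gets exactly one of its two directions. -/
def IsOrientation {V : Type*} (G : SimpleGraph V) (r : V → V → Prop) : Prop :=
  (∀ u v, r u v → G.Adj u v) ∧ (∀ u v, G.Adj u v → (r u v ↔ ¬ r v u))

/-- A directed relation is acyclic if it has no directed cycles. -/
def IsAcyclicRel {V : Type*} (r : V → V → Prop) : Prop :=
  ∀ v, ¬ Relation.TransGen r v v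

/-- The number of acyclic orientations of `G`. -/
noncomputable def acyclicOrientationCount {V : Type*} (G : SimpleGraph V) : ℕ :=
  Nat.card {r : V → V → Prop // IsOrientation G r ∧ IsAcyclicRel r}

/-- The simple graph obtained from `G` by contracting the edge `{u,w}`
(identifying `w` with `u`, removing loops and parallel edges). -/
def contractEdge {V : Type*} (G : SimpleGraph V) (u w : V) :
    SimpleGraph {x : V // x ≠ w} where
  Adj a b := a ≠ b ∧ (G.Adj a b ∨ (a.1 = u ∧ G.Adj w b.1) ∨ (b.1 = u ∧ G.Adj a.1 w))
  symm := by
    constructor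
    rintro a b ⟨hab, h | ⟨ha, h⟩ | ⟨hb, h⟩⟩
    · exact ⟨hab.symm, Or.inl h.symm⟩
    · exact ⟨hab.symm, Or.inr (Or.inr ⟨ha, h.symm⟩)⟩
    · exact ⟨hab.symm, Or.inr (Or.inl ⟨hb, h.symm⟩)⟩
  loopless := by constructor; rintro a ⟨h, -⟩; exact h rfl

open Relation

theorem Nat.card_subtype_add_card_subtype_not {α : Type*} [Finite α] (p : α → Prop) :
    Nat.card {a // p a} + Nat.card {a // ¬ p a} = Nat.card α := by
  classical
  rw [← Nat.card_sum]
  exact Nat.card_congr (Equiv.sumCompl p)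

theorem Nat.card_subtype_and_add_card_subtype_and_not {α : Type*} [Finite α]
    (p q : α → Prop) :
    Nat.card {a // p a ∧ q a} + Nat.card {a // p a ∧ ¬ q a} = Nat.card {a // p a} := by
  rw [← Nat.card_subtype_add_card_subtype_not fun a : {a // p a} => q a,
    Nat.card_congr (Equiv.subtypeSubtypeEquivSubtypeInter p q),
    Nat.card_congr (Equiv.subtypeSubtypeEquivSubtypeInter p (¬ q ·))]

section AcyclicOrientations

variable {V W : Type*}

abbrev AcyclicOrientation (G : SimpleGraph V) : Type _ :=
  {r : V → V → Prop // IsOrientation G r ∧ IsAcyclicRel r}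

section Relations

variable {r : V → V → Prop} {a b : V}

theorem IsAcyclicRel.comap {s : W → W → Prop} (hs : IsAcyclicRel s) (f : V → W)
    (h : ∀ a b, r a b → s (f a) (f b)) : IsAcyclicRel r :=
  fun v hv => hs (f v) (TransGen.lift f h v v hv)

theorem IsAcyclicRel.asymm (hr : IsAcyclicRel r) (h : r a b) : ¬ r b a :=
  fun h' => hr a ((TransGen.single h).tail h')

variable {G : SimpleGraph V}

theorem IsOrientation.of_isAcyclicRel (hr : IsAcyclicRel r) (hadj : ∀ a b, r a b → G.Adj a b)
    (htotal : ∀ a b, G.Adj a b → r a b ∨ r b a) : IsOrientation G r :=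
  ⟨hadj, fun a b hab => ⟨hr.asymm, (htotal a b hab).resolve_right⟩⟩

theorem IsOrientation.rel_or_rel (hr : IsOrientation G r) (h : G.Adj a b) : r a b ∨ r b a :=
  or_iff_not_imp_right.mpr (hr.2 a b h).mpr

end Relations

section Hom

variable {H : SimpleGraph V} {K : SimpleGraph W} {σ : V → V → Prop} {τ : W → W → Prop}

def comapOrientation (H : SimpleGraph V) (f : V → W) (τ : W → W → Prop) : V → V → Prop :=
  fun a b => H.Adj a b ∧ τ (f a) (f b)

theorem IsOrientation.comap (f : H →g K) (hτ : IsOrientation K τ) :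
    IsOrientation H (comapOrientation H f τ) := by
  refine ⟨fun a b h => h.1, fun a b hab => ?_⟩
  simp [comapOrientation, hab, hab.symm, hτ.2 _ _ (f.map_adj hab)]

theorem isAcyclicRel_comapOrientation (hτ : IsAcyclicRel τ) (f : V → W) :
    IsAcyclicRel (comapOrientation H f τ) :=
  hτ.comap f fun _ _ h => h.2

theorem IsAcyclicRel.not_transGen_comapOrientation (hτ : IsAcyclicRel τ) {f : V → W} {x y : V}
    (h : f x = f y) : ¬ TransGen (comapOrientation H f τ) x y := fun hxy => by
  have hτxy : TransGen τ (f x) (f y) := TransGen.lift f (fun _ _ h => h.2) x y hxy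
  exact hτ (f y) (h ▸ hτxy)

theorem IsOrientation.map (f : H →g K)
    (hsurj : ∀ c d, K.Adj c d → ∃ a b, H.Adj a b ∧ f a = c ∧ f b = d)
    (hσ : IsOrientation H σ) (hac : IsAcyclicRel (Relation.Map σ f f)) :
    IsOrientation K (Relation.Map σ f f) := by
  refine .of_isAcyclicRel hac ?_ fun c d hcd => ?_
  · rintro _ _ ⟨a, b, h, rfl, rfl⟩
    exact f.map_adj (hσ.1 a b h)
  · obtain ⟨a, b, hab, rfl, rfl⟩ := hsurj c d hcd
    exact (hσ.rel_or_rel hab).imp (⟨a, b, ·, rfl, rfl⟩) (⟨b, a, ·, rfl, rfl⟩)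

theorem map_comapOrientation (f : H →g K)
    (hsurj : ∀ c d, K.Adj c d → ∃ a b, H.Adj a b ∧ f a = c ∧ f b = d)
    (hτ : IsOrientation K τ) : Relation.Map (comapOrientation H f τ) f f = τ := by
  ext c d
  constructor
  · rintro ⟨a, b, ⟨-, h⟩, rfl, rfl⟩
    exact h
  · intro h
    obtain ⟨a, b, hab, rfl, rfl⟩ := hsurj c d (hτ.1 c d h)
    exact ⟨a, b, ⟨hab, h⟩, rfl, rfl⟩

end Hom

section Deletion

variable {G : SimpleGraph V} {u w : V} {r σ : V → V → Prop}

theorem deleteEdges_singleton_adj {e : Sym2 V} {a b : V} :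
    (G.deleteEdges {e}).Adj a b ↔ G.Adj a b ∧ s(a, b) ≠ e := by
  simp

def addArrow (u w : V) (σ : V → V → Prop) : V → V → Prop :=
  fun a b => σ a b ∨ (a = u ∧ b = w)

def deleteEdgeRel (e : Sym2 V) (r : V → V → Prop) : V → V → Prop :=
  fun a b => r a b ∧ s(a, b) ≠ e

theorem isOrientation_deleteEdgeRel (hr : IsOrientation G r) (e : Sym2 V) :
    IsOrientation (G.deleteEdges {e}) (deleteEdgeRel e r) := by
  refine ⟨fun a b h => ?_, fun a b hab => ?_⟩
  · exact deleteEdges_singleton_adj.mpr ⟨hr.1 a b h.1, h.2⟩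
  · rw [deleteEdges_singleton_adj] at hab
    simp [deleteEdgeRel, Sym2.eq_swap, hab.2, hr.2 a b hab.1]

theorem isAcyclicRel_deleteEdgeRel (hr : IsAcyclicRel r) (e : Sym2 V) :
    IsAcyclicRel (deleteEdgeRel e r) :=
  hr.comap id fun _ _ h => h.1

theorem IsAcyclicRel.not_transGen_deleteEdgeRel (hr : IsAcyclicRel r) (h : r u w) (e : Sym2 V) :
    ¬ TransGen (deleteEdgeRel e r) w u := fun hwu =>
  hr u ((TransGen.single h).trans (TransGen.mono (fun _ _ h => h.1) _ _ hwu))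

theorem transGen_addArrow {a b : V} (h : TransGen (addArrow u w σ) a b) :
    TransGen σ a b ∨ (ReflTransGen σ a u ∧ ReflTransGen σ w b) := by
  induction h with
  | single h =>
    rcases h with h | ⟨rfl, rfl⟩
    · exact .inl (.single h)
    · exact .inr ⟨.refl, .refl⟩
  | tail _ hbc ih =>
    rcases hbc with hbc | ⟨rfl, rfl⟩
    · exact ih.imp (·.tail hbc) fun ⟨hau, hwb⟩ => ⟨hau, hwb.tail hbc⟩
    · exact .inr ⟨ih.elim (·.to_reflTransGen) (·.1), .refl⟩

theorem isAcyclicRel_addArrow (huw : u ≠ w) (hσ : IsAcyclicRel σ) (hwu : ¬ TransGen σ w u) :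
    IsAcyclicRel (addArrow u w σ) := fun v hv => by
  rcases transGen_addArrow hv with h | ⟨hvu, hwv⟩
  · exact hσ v h
  · rcases reflTransGen_iff_eq_or_transGen.mp (hwv.trans hvu) with h | h
    exacts [huw h, hwu h]

theorem isOrientation_addArrow (he : G.Adj u w)
    (hσ : IsOrientation (G.deleteEdges {s(u, w)}) σ) (hac : IsAcyclicRel (addArrow u w σ)) :
    IsOrientation G (addArrow u w σ) := by
  refine .of_isAcyclicRel hac ?_ fun a b hab => ?_
  · rintro a b (h | ⟨rfl, rfl⟩)
    exacts [(deleteEdges_singleton_adj.mp (hσ.1 a b h)).1, he]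
  · by_cases hE : s(a, b) = s(u, w)
    · rcases Sym2.eq_iff.mp hE with ⟨rfl, rfl⟩ | ⟨rfl, rfl⟩
      exacts [.inl (.inr ⟨rfl, rfl⟩), .inr (.inr ⟨rfl, rfl⟩)]
    · exact (hσ.rel_or_rel (deleteEdges_singleton_adj.mpr ⟨hab, hE⟩)).imp .inl .inl

theorem deleteEdgeRel_addArrow (hσ : IsOrientation (G.deleteEdges {s(u, w)}) σ) :
    deleteEdgeRel s(u, w) (addArrow u w σ) = σ := by
  ext a b
  constructor
  · rintro ⟨h | ⟨rfl, rfl⟩, hE⟩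
    exacts [h, absurd rfl hE]
  · intro h
    exact ⟨.inl h, (deleteEdges_singleton_adj.mp (hσ.1 a b h)).2⟩

theorem addArrow_deleteEdgeRel (hr : IsOrientation G r) (h : r u w) :
    addArrow u w (deleteEdgeRel s(u, w) r) = r := by
  ext a b
  constructor
  · rintro (⟨hab, -⟩ | ⟨rfl, rfl⟩)
    exacts [hab, h]
  · intro hab
    by_cases hE : s(a, b) = s(u, w)
    · rcases Sym2.eq_iff.mp hE with ⟨rfl, rfl⟩ | ⟨rfl, rfl⟩
      · exact .inr ⟨rfl, rfl⟩
      · exact absurd h ((hr.2 a b (hr.1 a b hab)).mp hab)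
    · exact .inl ⟨hab, hE⟩

def acyclicOrientationArrowEquiv (he : G.Adj u w) :
    {r : AcyclicOrientation G // r.1 u w} ≃
      {σ : AcyclicOrientation (G.deleteEdges {s(u, w)}) // ¬ TransGen σ.1 w u} where
  toFun r := ⟨⟨deleteEdgeRel s(u, w) r.1.1, isOrientation_deleteEdgeRel r.1.2.1 _,
    isAcyclicRel_deleteEdgeRel r.1.2.2 _⟩, r.1.2.2.not_transGen_deleteEdgeRel r.2 _⟩
  invFun σ :=
    have hac := isAcyclicRel_addArrow he.ne σ.1.2.2 σ.2
    ⟨⟨addArrow u w σ.1.1, isOrientation_addArrow he σ.1.2.1 hac, hac⟩, .inr ⟨rfl, rfl⟩⟩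
  left_inv r := Subtype.ext (Subtype.ext (addArrow_deleteEdgeRel r.1.2.1 r.2))
  right_inv σ := Subtype.ext (Subtype.ext (deleteEdgeRel_addArrow σ.1.2.1))

end Deletion

section Contraction

variable {G : SimpleGraph V} {u w : V} {σ : V → V → Prop}

open Classical in
noncomputable def contractVert (huw : u ≠ w) (x : V) : {x : V // x ≠ w} :=
  if h : x = w then ⟨u, huw⟩ else ⟨x, h⟩

theorem contractVert_of_ne (huw : u ≠ w) {x : V} (hx : x ≠ w) :
    contractVert huw x = ⟨x, hx⟩ :=
  dif_neg hx

theorem contractVert_self (huw : u ≠ w) : contractVert huw w = ⟨u, huw⟩ :=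
  dif_pos rfl

theorem contractVert_val (huw : u ≠ w) (c : {x : V // x ≠ w}) : contractVert huw c = c :=
  contractVert_of_ne huw c.2

theorem contractVert_eq_contractVert_iff (huw : u ≠ w) {a b : V} :
    contractVert huw a = contractVert huw b ↔ a = b ∨ (a ∈ s(u, w) ∧ b ∈ s(u, w)) := by
  unfold contractVert
  split_ifs <;> simp only [Subtype.mk.injEq, Sym2.mem_iff] <;> grind

theorem contractEdge_adj_contractVert (huw : u ≠ w) {a b : V}
    (hab : (G.deleteEdges {s(u, w)}).Adj a b) :
    (contractEdge G u w).Adj (contractVert huw a) (contractVert huw b) := by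
  obtain ⟨hG, hE⟩ := deleteEdges_singleton_adj.mp hab
  refine ⟨fun h => ?_, ?_⟩
  · rcases (contractVert_eq_contractVert_iff huw).mp h with h | h
    exacts [hG.ne h, hE ((Sym2.mem_and_mem_iff hG.ne).mp h).symm]
  · by_cases ha : a = w
    · subst ha
      rw [contractVert_self, contractVert_of_ne huw hG.ne']
      exact .inr (.inl ⟨rfl, hG⟩)
    · by_cases hb : b = w
      · subst hb
        rw [contractVert_of_ne huw ha, contractVert_self]
        exact .inr (.inr ⟨rfl, hG⟩)
      · rw [contractVert_of_ne huw ha, contractVert_of_ne huw hb]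
        exact .inl hG

noncomputable def contractHom (huw : u ≠ w) :
    G.deleteEdges {s(u, w)} →g contractEdge G u w where
  toFun := contractVert huw
  map_rel' := contractEdge_adj_contractVert huw

theorem exists_adj_contractVert (huw : u ≠ w) {c d : {x : V // x ≠ w}}
    (hcd : (contractEdge G u w).Adj c d) :
    ∃ a b, (G.deleteEdges {s(u, w)}).Adj a b ∧ contractVert huw a = c ∧
      contractVert huw b = d := by
  obtain ⟨hne, h | ⟨hc, h⟩ | ⟨hd, h⟩⟩ := hcd
  · refine ⟨c, d, deleteEdges_singleton_adj.mpr ⟨h, fun hE => ?_⟩,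
      contractVert_val huw c, contractVert_val huw d⟩
    rcases Sym2.mem_iff.mp (hE ▸ Sym2.mem_mk_right u w) with h | h
    exacts [c.2 h.symm, d.2 h.symm]
  · refine ⟨w, d, deleteEdges_singleton_adj.mpr ⟨h, fun hE => ?_⟩,
      (contractVert_self huw).trans (Subtype.ext hc.symm), contractVert_val huw d⟩
    rcases Sym2.eq_iff.mp hE with ⟨h, -⟩ | ⟨-, h⟩
    exacts [huw h.symm, hne (Subtype.ext (hc.trans h.symm))]
  · refine ⟨c, w, deleteEdges_singleton_adj.mpr ⟨h, fun hE => ?_⟩,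
      contractVert_val huw c, (contractVert_self huw).trans (Subtype.ext hd.symm)⟩
    rcases Sym2.eq_iff.mp hE with ⟨h, -⟩ | ⟨h, -⟩
    exacts [hne (Subtype.ext (h.trans hd.symm)), c.2 h]

theorem IsAcyclicRel.forall_mem_sym2_not_transGen (hσ : IsAcyclicRel σ)
    (huw : ¬ TransGen σ u w) (hwu : ¬ TransGen σ w u) :
    ∀ x ∈ s(u, w), ∀ y ∈ s(u, w), ¬ TransGen σ x y := by
  simp only [Sym2.mem_iff]
  rintro x (rfl | rfl) y (rfl | rfl)
  exacts [hσ _, huw, hwu, hσ _]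

/-- A path of the pushed-forward relation lifts to a `σ`-path that jumps at most once between
the two ends of the contracted edge. -/
theorem transGen_map_contractVert (huw : u ≠ w)
    (hends : ∀ x ∈ s(u, w), ∀ y ∈ s(u, w), ¬ TransGen σ x y) {c d : {x : V // x ≠ w}}
    (h : TransGen (Relation.Map σ (contractVert huw) (contractVert huw)) c d) :
    ∃ a b, contractVert huw a = c ∧ contractVert huw b = d ∧
      (TransGen σ a b ∨ ∃ p ∈ s(u, w), ∃ q ∈ s(u, w), TransGen σ a p ∧ ReflTransGen σ q b) := by
  induction h using TransGen.head_induction_on with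
  | single h =>
    obtain ⟨a, b, hab, rfl, rfl⟩ := h
    exact ⟨a, b, rfl, rfl, .inl (.single hab)⟩
  | head h _ ih =>
    obtain ⟨a, b, hab, rfl, hb⟩ := h
    obtain ⟨a', b', rfl, rfl, hpath⟩ := ih
    refine ⟨a, b', rfl, rfl, ?_⟩
    rcases (contractVert_eq_contractVert_iff huw).mp hb with rfl | ⟨hb, ha'⟩
    · exact hpath.imp (·.head hab)
        fun ⟨p, hp, q, hq, hbp, hqb'⟩ => ⟨p, hp, q, hq, hbp.head hab, hqb'⟩
    · rcases hpath with h | ⟨p, hp, -, -, ha'p, -⟩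
      · exact .inr ⟨b, hb, a', ha', .single hab, h.to_reflTransGen⟩
      · exact absurd ha'p (hends a' ha' p hp)

theorem isAcyclicRel_map_contractVert (huw : u ≠ w) (hσ : IsAcyclicRel σ)
    (hends : ∀ x ∈ s(u, w), ∀ y ∈ s(u, w), ¬ TransGen σ x y) :
    IsAcyclicRel (Relation.Map σ (contractVert huw) (contractVert huw)) := by
  intro c hc
  obtain ⟨a, b, rfl, hba, hpath⟩ := transGen_map_contractVert huw hends hc
  rcases (contractVert_eq_contractVert_iff huw).mp hba with rfl | ⟨hb, ha⟩
  · rcases hpath with h | ⟨p, hp, q, hq, hbp, hqb⟩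
    exacts [hσ b h, hends q hq p hp (TransGen.trans_right hqb hbp)]
  · rcases hpath with h | ⟨p, hp, -, -, hap, -⟩
    exacts [hends a ha b hb h, hends a ha p hp hap]

theorem comapOrientation_map_contractVert (huw : u ≠ w) {H : SimpleGraph V}
    (hσ : IsOrientation H σ) (hends : ∀ x ∈ s(u, w), ∀ y ∈ s(u, w), ¬ TransGen σ x y) :
    comapOrientation H (contractVert huw)
      (Relation.Map σ (contractVert huw) (contractVert huw)) = σ := by
  ext a b
  refine ⟨fun ⟨hab, a', b', h, ha', hb'⟩ => ?_, fun h => ⟨hσ.1 a b h, a, b, h, rfl, rfl⟩⟩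
  by_contra hn
  have hba : σ b a := (hσ.rel_or_rel hab).resolve_left hn
  rcases (contractVert_eq_contractVert_iff huw).mp ha' with rfl | ⟨ha', ha⟩ <;>
    rcases (contractVert_eq_contractVert_iff huw).mp hb' with rfl | ⟨hb', hb⟩
  · exact hn h
  · exact hends b hb b' hb' ((TransGen.single hba).tail h)
  · exact hends a' ha' a ha ((TransGen.single h).tail hba)
  · exact hends a' ha' b' hb' (.single h)

noncomputable def acyclicOrientationContractEquiv (huw : u ≠ w) :
    {σ : AcyclicOrientation (G.deleteEdges {s(u, w)}) //
      ¬ TransGen σ.1 u w ∧ ¬ TransGen σ.1 w u} ≃ AcyclicOrientation (contractEdge G u w) :=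
  have hsurj := fun _ _ => exists_adj_contractVert (G := G) huw
  have hπ : contractVert huw u = contractVert huw w :=
    (contractVert_eq_contractVert_iff huw).mpr (.inr ⟨Sym2.mem_mk_left u w, Sym2.mem_mk_right u w⟩)
  { toFun σ :=
      have hac := isAcyclicRel_map_contractVert huw σ.1.2.2
        (σ.1.2.2.forall_mem_sym2_not_transGen σ.2.1 σ.2.2)
      ⟨_, σ.1.2.1.map (contractHom huw) hsurj hac, hac⟩
    invFun τ := ⟨⟨comapOrientation _ (contractVert huw) τ.1, τ.2.1.comap (contractHom huw),
        isAcyclicRel_comapOrientation τ.2.2 _⟩,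
      τ.2.2.not_transGen_comapOrientation hπ, τ.2.2.not_transGen_comapOrientation hπ.symm⟩
    left_inv σ := Subtype.ext (Subtype.ext (comapOrientation_map_contractVert huw σ.1.2.1
      (σ.1.2.2.forall_mem_sym2_not_transGen σ.2.1 σ.2.2)))
    right_inv τ := Subtype.ext (map_comapOrientation (contractHom huw) hsurj τ.2.1) }

end Contraction

theorem card_acyclicOrientation_eq_add_of_adj [Finite V] {G : SimpleGraph V} {u w : V}
    (he : G.Adj u w) :
    Nat.card (AcyclicOrientation G) =
      Nat.card {σ : AcyclicOrientation (G.deleteEdges {s(u, w)}) // ¬ TransGen σ.1 w u} +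
        Nat.card {σ : AcyclicOrientation (G.deleteEdges {s(u, w)}) // ¬ TransGen σ.1 u w} := by
  have hswap := acyclicOrientationArrowEquiv he.symm
  rw [Sym2.eq_swap] at hswap
  rw [← Nat.card_subtype_add_card_subtype_not fun r : AcyclicOrientation G => r.1 u w,
    Nat.card_congr (acyclicOrientationArrowEquiv he),
    Nat.card_congr ((Equiv.subtypeEquivRight fun r => (r.2.1.2 w u he.symm).symm).trans hswap)]

theorem card_not_transGen_eq_add_card_contractEdge [Finite V] {G : SimpleGraph V} {u w : V}
    (huw : u ≠ w) :
    Nat.card {σ : AcyclicOrientation (G.deleteEdges {s(u, w)}) // ¬ TransGen σ.1 u w} =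
      Nat.card {σ : AcyclicOrientation (G.deleteEdges {s(u, w)}) // TransGen σ.1 w u} +
        Nat.card (AcyclicOrientation (contractEdge G u w)) := by
  rw [← Nat.card_congr (acyclicOrientationContractEquiv huw),
    ← Nat.card_subtype_and_add_card_subtype_and_not _ fun σ => TransGen σ.1 w u]
  congr 1
  exact Nat.card_congr (Equiv.subtypeEquivRight fun σ =>
    and_iff_right_of_imp fun hwu huw' => σ.2.2 u (huw'.trans hwu))

end AcyclicOrientations

theorem acyclicOrientationCount_deletion_contraction {V : Type*} [Fintype V]
    (G : SimpleGraph V) (u w : V) (he : G.Adj u w) :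
    acyclicOrientationCount G =
      acyclicOrientationCount (G.deleteEdges {s(u, w)}) +
        acyclicOrientationCount (contractEdge G u w) := by
  have hG := card_acyclicOrientation_eq_add_of_adj he
  have hG' := Nat.card_subtype_add_card_subtype_not
    fun σ : AcyclicOrientation (G.deleteEdges {s(u, w)}) => TransGen σ.1 w u
  have hcontract := card_not_transGen_eq_add_card_contractEdge (G := G) he.ne
  change Nat.card (AcyclicOrientation G) = Nat.card (AcyclicOrientation _) +
    Nat.card (AcyclicOrientation _)
  omega
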